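/- arXiv:2007.03007 — 12 statements merged into one kernel-verified Lean document; each statement's English description precedes it below -/
import Mathlib

section
/- Let k ≥ 1, and let y : Fin k → ℕ be a supply profile and n : Fin k → ℕ a demand profile. Define the set U = { u : Fin k → ℕ | ∀ j, (∑_{l ≤ j} u l) ≤ (∑_{l ≤ j} y l) and u j ≤ n j }. Then for any u ∈ U, there exists an allocation, i.e. a matrix A with entries in {0,1} whose rows are indexed by consumers partitioned into flexibility classes (n j consumers of flexibility level j) and whose columns are indexed by varieties, such that (a) each consumer of flexibility level j receives at most one good and only of varieties l ≤ j, (b) at most y l goods of variety l are allocated in total, and (c) exactly u j consumers of flexibility level j receive a good. -/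
/-- For `g` below a prefix sum of `y`, there is a level `l` whose supply interval contains `g`. -/
lemma exists_level {k : ℕ} (y : Fin k → ℕ) (g : ℕ) (j : Fin k)
    (hg : g < ∑ m ∈ Finset.Iic j, y m) :
    ∃ l : Fin k, (∑ m ∈ Finset.Iio l, y m) ≤ g ∧ g < ∑ m ∈ Finset.Iic l, y m := by
  classical
  set S : Finset (Fin k) :=
    Finset.univ.filter (fun l => g < ∑ m ∈ Finset.Iic l, y m) with hS
  have hjS : j ∈ S := by simp [hS, hg]
  have hne : S.Nonempty := ⟨j, hjS⟩
  refine ⟨S.min' hne, ?_, ?_⟩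
  · by_contra h
    push_neg at h
    set l := S.min' hne with hl
    have hl0 : 0 < l.val := by
      rcases Nat.eq_zero_or_pos l.val with h0 | h0
      · exfalso
        have hempty : Finset.Iio l = ∅ := by
          ext m
          simp only [Finset.mem_Iio, Finset.notMem_empty, iff_false, Fin.lt_def, h0]
          omega
        rw [hempty] at h
        simp at h
      · exact h0
    have hlk : l.val - 1 < k := by omega
    set l' : Fin k := ⟨l.val - 1, hlk⟩ with hl'
    have hiic : Finset.Iic l' = Finset.Iio l := by
      ext m
      simp only [Finset.mem_Iic, Finset.mem_Iio, Fin.le_def, Fin.lt_def, hl', Fin.val_mk]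
      omega
    have hl'S : l' ∈ S := by
      simp only [hS, Finset.mem_filter, Finset.mem_univ, true_and]
      rw [hiic]; exact h
    have hle := S.min'_le l' hl'S
    rw [← hl] at hle
    have hcontra : l.val ≤ l.val - 1 := hle
    omega
  · have := S.min'_mem hne
    simp only [hS, Finset.mem_filter] at this
    exact this.2

/-- For any service vector `u` satisfying the prefix-sum supply constraints and
per-level demand constraints, there exists a feasible 0-1 allocation matrix serving exactly
`u j` consumers of each flexibility level `j`, giving each served consumer one good of a
variety `l ≤ j`, and respecting the supply `y`. -/
theorem stmt0 (k : ℕ) (hk : 1 ≤ k) (y n u : Fin k → ℕ)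
    (hu : ∀ j : Fin k,
      (∑ l ∈ Finset.Iic j, u l) ≤ (∑ l ∈ Finset.Iic j, y l) ∧ u j ≤ n j) :
    ∃ A : (j : Fin k) → Fin (n j) → Fin k → Bool,
      (∀ (j : Fin k) (i : Fin (n j)),
        (∑ l : Fin k, (if A j i l then 1 else 0)) ≤ 1) ∧
      (∀ (j : Fin k) (i : Fin (n j)) (l : Fin k), A j i l = true → l ≤ j) ∧
      (∀ l : Fin k,
        (∑ j : Fin k, ∑ i : Fin (n j), (if A j i l then 1 else 0)) ≤ y l) ∧
      (∀ j : Fin k,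
        (∑ i : Fin (n j), ∑ l : Fin k, (if A j i l then 1 else 0)) = u j) := by
  classical
  -- global good index of consumer i of level j
  set Q : Fin k → ℕ := fun j => ∑ m ∈ Finset.Iio j, u m with hQ
  set g : (j : Fin k) → Fin (n j) → ℕ := fun j i => Q j + i.val with hg
  set A : (j : Fin k) → Fin (n j) → Fin k → Bool := fun j i l =>
    decide (i.val < u j ∧ (∑ m ∈ Finset.Iio l, y m) ≤ g j i ∧
      g j i < ∑ m ∈ Finset.Iic l, y m) with hA
  have hAiff : ∀ (j : Fin k) (i : Fin (n j)) (l : Fin k),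
      A j i l = true ↔ (i.val < u j ∧ (∑ m ∈ Finset.Iio l, y m) ≤ g j i ∧
        g j i < ∑ m ∈ Finset.Iic l, y m) := by
    intro j i l; simp [hA]
  -- Iic as insert of Iio
  have hQu : ∀ j : Fin k, Q j + u j = ∑ m ∈ Finset.Iic j, u m := by
    intro j
    have : Finset.Iic j = insert j (Finset.Iio j) := by
      ext m; simp [Finset.mem_Iic, Finset.mem_Iio, le_iff_lt_or_eq, or_comm]
    rw [this, Finset.sum_insert (by simp)]
    simp [hQ]; ring
  -- uniqueness of the level for a given (j,i)
  have huniq : ∀ (j : Fin k) (i : Fin (n j)) (l l' : Fin k),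
      A j i l = true → A j i l' = true → l = l' := by
    intro j i l l' h h'
    rw [hAiff] at h h'
    by_contra hne
    rcases lt_or_gt_of_ne hne with hlt | hlt
    · have hsub : Finset.Iic l ⊆ Finset.Iio l' := by
        intro m hm
        simp only [Finset.mem_Iic] at hm
        simp only [Finset.mem_Iio]
        exact lt_of_le_of_lt hm hlt
      have := Finset.sum_le_sum_of_subset hsub (f := y)
      omega
    · have hsub : Finset.Iic l' ⊆ Finset.Iio l := by
        intro m hm
        simp only [Finset.mem_Iic] at hm
        simp only [Finset.mem_Iio]
        exact lt_of_le_of_lt hm hlt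
      have := Finset.sum_le_sum_of_subset hsub (f := y)
      omega
  -- variety respects flexibility
  have hvar : ∀ (j : Fin k) (i : Fin (n j)) (l : Fin k), A j i l = true → l ≤ j := by
    intro j i l h
    rw [hAiff] at h
    obtain ⟨hi, hlo, hhi⟩ := h
    by_contra hjl
    push_neg at hjl
    have hsub : Finset.Iic j ⊆ Finset.Iio l := by
      intro m hm
      simp only [Finset.mem_Iic] at hm
      simp only [Finset.mem_Iio]
      exact lt_of_le_of_lt hm hjl
    have h1 := Finset.sum_le_sum_of_subset hsub (f := y)
    have h2 : g j i < ∑ m ∈ Finset.Iic j, u m := by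
      rw [← hQu j]; simp only [hg]; omega
    have h3 := (hu j).1
    omega
  -- injectivity of g on served pairs
  have hinj : ∀ (j j' : Fin k) (i : Fin (n j)) (i' : Fin (n j')),
      i.val < u j → i'.val < u j' → g j i = g j' i' → j = j' ∧ i.val = i'.val := by
    intro j j' i i' hi hi' hgeq
    have hjj : j = j' := by
      by_contra hne
      rcases lt_or_gt_of_ne hne with hlt | hlt
      · have hsub : Finset.Iic j ⊆ Finset.Iio j' := by
          intro m hm
          simp only [Finset.mem_Iic] at hm
          simp only [Finset.mem_Iio]
          exact lt_of_le_of_lt hm hlt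
        have h1 := Finset.sum_le_sum_of_subset hsub (f := u)
        have h2 := hQu j
        simp only [hg, hQ] at hgeq h2 ⊢
        omega
      · have hsub : Finset.Iic j' ⊆ Finset.Iio j := by
          intro m hm
          simp only [Finset.mem_Iic] at hm
          simp only [Finset.mem_Iio]
          exact lt_of_le_of_lt hm hlt
        have h1 := Finset.sum_le_sum_of_subset hsub (f := u)
        have h2 := hQu j'
        simp only [hg, hQ] at hgeq h2 ⊢
        omega
    refine ⟨hjj, ?_⟩
    subst hjj
    simp only [hg] at hgeq
    omega
  have hYu : ∀ l : Fin k, (∑ m ∈ Finset.Iio l, y m) + y l = ∑ m ∈ Finset.Iic l, y m := by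
    intro l
    have : Finset.Iic l = insert l (Finset.Iio l) := by
      ext m; simp [Finset.mem_Iic, Finset.mem_Iio, le_iff_lt_or_eq, or_comm]
    rw [this, Finset.sum_insert (by simp)]
    ring
  refine ⟨A, ?_, hvar, ?_, ?_⟩
  · -- each consumer gets at most one good
    intro j i
    rw [Finset.sum_boole]
    simp only [Nat.cast_id]
    apply Finset.card_le_one.mpr
    intro a ha b hb
    simp only [Finset.mem_filter] at ha hb
    exact huniq j i a b ha.2 hb.2
  · -- supply constraint
    intro l
    have hsig : (∑ j : Fin k, ∑ i : Fin (n j), (if A j i l then 1 else 0)) =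
        (∑ p : (j : Fin k) × Fin (n j), (if A p.1 p.2 l then 1 else 0)) := by
      rw [← Finset.univ_sigma_univ, Finset.sum_sigma]
    rw [hsig, Finset.sum_boole]
    simp only [Nat.cast_id]
    have hcard : (Finset.Ico (∑ m ∈ Finset.Iio l, y m) (∑ m ∈ Finset.Iic l, y m)).card
        = y l := by
      rw [Nat.card_Ico]
      have := hYu l
      omega
    rw [← hcard]
    apply Finset.card_le_card_of_injOn (fun p => g p.1 p.2)
    · intro p hp
      simp only [Finset.mem_coe, Finset.mem_filter] at hp
      rw [hAiff] at hp
      simp only [Finset.mem_coe, Finset.mem_Ico]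
      exact hp.2.2
    · intro p hp q hq hpq
      simp only [Finset.coe_filter, Set.mem_setOf_eq] at hp hq
      rw [hAiff] at hp hq
      obtain ⟨j, i⟩ := p
      obtain ⟨j', i'⟩ := q
      obtain ⟨hjj, hii⟩ := hinj j j' i i' hp.2.1 hq.2.1 hpq
      subst hjj
      simp only [Sigma.mk.inj_iff, heq_eq_eq]
      exact ⟨trivial, Fin.ext hii⟩
  · -- exactness
    intro j
    have hrow : ∀ i : Fin (n j),
        (∑ l : Fin k, if A j i l then 1 else 0) = if i.val < u j then 1 else 0 := by
      intro i
      by_cases hi : i.val < u j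
      · rw [if_pos hi]
        have hgb : g j i < ∑ m ∈ Finset.Iic j, y m := by
          have h2 : g j i < ∑ m ∈ Finset.Iic j, u m := by
            rw [← hQu j]; simp only [hg]; omega
          exact lt_of_lt_of_le h2 (hu j).1
        obtain ⟨l, hlo, hhi⟩ := exists_level y (g j i) j hgb
        have hAl : A j i l = true := (hAiff j i l).mpr ⟨hi, hlo, hhi⟩
        rw [Finset.sum_boole]
        simp only [Nat.cast_id]
        rw [Finset.card_eq_one]
        refine ⟨l, ?_⟩
        ext l'
        simp only [Finset.mem_filter, Finset.mem_univ, true_and, Finset.mem_singleton]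
        constructor
        · intro h; exact huniq j i l' l h hAl
        · intro h; subst h; exact hAl
      · rw [if_neg hi]
        apply Finset.sum_eq_zero
        intro l _
        have : A j i l = false := by
          rw [hA]
          simp only [decide_eq_false_iff_not]
          intro h
          exact hi h.1
        simp [this]
    calc (∑ i : Fin (n j), ∑ l : Fin k, (if A j i l then 1 else 0))
        = ∑ i : Fin (n j), (if i.val < u j then 1 else 0) := by
          exact Finset.sum_congr rfl (fun i _ => hrow i)
      _ = ∑ m ∈ Finset.range (n j), (if m < u j then 1 else 0) := by
          rw [Fin.sum_univ_eq_sum_range (fun m => if m < u j then 1 else 0) (n j)]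
      _ = u j := by
          rw [Finset.sum_boole]
          simp only [Nat.cast_id]
          have : (Finset.range (n j)).filter (fun m => m < u j) = Finset.range (u j) := by
            ext m
            simp only [Finset.mem_filter, Finset.mem_range]
            have := (hu j).2
            omega
          rw [this, Finset.card_range]
end

section
/- Let k ≥ 1, y : Fin k → ℕ, n : Fin k → ℕ. If there exists a feasible allocation matrix serving exactly u j consumers of flexibility level j for each j (each consumer of level j gets at most one good of some variety l ≤ j, and variety-l allocations total at most y l), then for every j, ∑_{l ≤ j} u l ≤ ∑_{l ≤ j} y l and u j ≤ n j. Combined with the previous direction, the set of achievable service vectors u equals { u | ∀ j, ∑_{l ≤ j} u l ≤ ∑_{l ≤ j} y l and u j ≤ n j }. -/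
/-! Consumers of level `j` only receive varieties `l ≤ j`, so the served consumers of all
levels `≤ J` draw only on the goods of varieties `≤ J`: the matrix of service counts is lower
triangular, and its row sums over rows `≤ J` total at most its column sums over columns `≤ J`. -/

open Finset

theorem sum_Iic_sum_le_sum_Iic_sum_of_lowerTriangular {ι M : Type*} [Preorder ι]
    [LocallyFiniteOrderBot ι] [Fintype ι] [AddCommMonoid M] [Preorder M]
    [CanonicallyOrderedAdd M] (a : ι → ι → M) (ha : ∀ j l, a j l ≠ 0 → l ≤ j) (J : ι) :
    ∑ j ∈ Iic J, ∑ l, a j l ≤ ∑ l ∈ Iic J, ∑ j, a j l :=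
  calc ∑ j ∈ Iic J, ∑ l, a j l
      = ∑ j ∈ Iic J, ∑ l ∈ Iic J, a j l := by
        refine sum_congr rfl fun j hj => (sum_subset (subset_univ _) fun l _ hl => ?_).symm
        by_contra h
        exact hl (mem_Iic.mpr ((ha j l h).trans (mem_Iic.mp hj)))
    _ = ∑ l ∈ Iic J, ∑ j ∈ Iic J, a j l := sum_comm
    _ ≤ ∑ l ∈ Iic J, ∑ j, a j l :=
        sum_le_sum fun l _ => sum_le_sum_of_subset (subset_univ _)

theorem stmt1_general (k : ℕ) (y n u : Fin k → ℕ)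
    (A : (j : Fin k) → Fin (n j) → Fin k → Bool)
    (ha1 : ∀ (j : Fin k) (i : Fin (n j)),
      (∑ l : Fin k, (if A j i l then 1 else 0)) ≤ 1)
    (ha2 : ∀ (j : Fin k) (i : Fin (n j)) (l : Fin k), A j i l = true → l ≤ j)
    (hb : ∀ l : Fin k,
      (∑ j : Fin k, ∑ i : Fin (n j), (if A j i l then 1 else 0)) ≤ y l)
    (hc : ∀ j : Fin k,
      (∑ i : Fin (n j), ∑ l : Fin k, (if A j i l then 1 else 0)) = u j) :
    ∀ j : Fin k,
      (∑ l ∈ Finset.Iic j, u l) ≤ (∑ l ∈ Finset.Iic j, y l) ∧ u j ≤ n j := by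
  intro J
  set served : Fin k → Fin k → ℕ := fun j l => ∑ i : Fin (n j), if A j i l then 1 else 0
  have hu : ∀ j, u j = ∑ l, served j l := fun j => (hc j).symm.trans sum_comm
  have hserved : ∀ j l, served j l ≠ 0 → l ≤ j := fun j l h => by
    obtain ⟨i, -, hi⟩ := exists_ne_zero_of_sum_ne_zero h
    exact ha2 j i l (by simpa using hi)
  refine ⟨?_, ?_⟩
  · calc ∑ l ∈ Iic J, u l = ∑ j ∈ Iic J, ∑ l, served j l := sum_congr rfl fun j _ => hu j
      _ ≤ ∑ l ∈ Iic J, ∑ j, served j l :=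
        sum_Iic_sum_le_sum_Iic_sum_of_lowerTriangular served hserved J
      _ ≤ ∑ l ∈ Iic J, y l := sum_le_sum fun l _ => hb l
  · calc u J = ∑ i : Fin (n J), ∑ l, (if A J i l then 1 else 0) := (hc J).symm
      _ ≤ ∑ _i : Fin (n J), 1 := sum_le_sum fun i _ => ha1 J i
      _ = n J := by simp

/-- If a feasible allocation matrix serves exactly `u j` consumers of each
flexibility level `j` (each level-`j` consumer gets at most one good, only of varieties
`l ≤ j`, and variety-`l` allocations total at most `y l`), then for every `j`,
`∑_{l ≤ j} u l ≤ ∑_{l ≤ j} y l` and `u j ≤ n j`. -/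
theorem stmt1 (k : ℕ) (hk : 1 ≤ k) (y n u : Fin k → ℕ)
    (A : (j : Fin k) → Fin (n j) → Fin k → Bool)
    (ha1 : ∀ (j : Fin k) (i : Fin (n j)),
      (∑ l : Fin k, (if A j i l then 1 else 0)) ≤ 1)
    (ha2 : ∀ (j : Fin k) (i : Fin (n j)) (l : Fin k), A j i l = true → l ≤ j)
    (hb : ∀ l : Fin k,
      (∑ j : Fin k, ∑ i : Fin (n j), (if A j i l then 1 else 0)) ≤ y l)
    (hc : ∀ j : Fin k,
      (∑ i : Fin (n j), ∑ l : Fin k, (if A j i l then 1 else 0)) = u j) :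
    ∀ j : Fin k,
      (∑ l ∈ Finset.Iic j, u l) ≤ (∑ l ∈ Finset.Iic j, y l) ∧ u j ≤ n j :=
  stmt1_general k y n u A ha1 ha2 hb hc
end

section
/- Let k ≥ 1, y u : Fin k → ℕ with ∀ j, ∑_{l ≤ j} u l ≤ ∑_{l ≤ j} y l. Define v* : Fin k → ℕ recursively from the top: v*(k) = min(u k, y k), and for j < k, v*(j) = min( y j, u j + (∑_{l > j} u l − ∑_{l > j} v* l) ). Then v* satisfies: (i) v* j ≤ y j for all j; (ii) ∑_{l ≤ j} u l ≤ ∑_{l ≤ j} v* l for all j < k; and (iii) ∑_{l=1}^{k} v* l = ∑_{l=1}^{k} u l. -/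
/-!
Write `U j` and `V j` for the sums of `u` and `v` over the indices above `j`. A downward induction
shows `V j ≤ U j`, so the truncated subtraction in the recursion never truncates, and a second one
shows `U j + ∑_{l ≤ j} u l ≤ V j + ∑_{l ≤ j} y l`: if `v (j+1) = y (j+1)` this is inherited from
`j + 1`, and otherwise `v (j+1) + V (j+1) = U j`, so it is the feasibility condition at `j`.
At the least index the second inequality forces `v` to meet the whole demand, so `∑ v = ∑ u`, and
prefix dominance is tail domination `V j ≤ U j` read on the complementary prefix.
-/

open Finset Order

section GreedyAllocation

variable {ι : Type*} [LinearOrder ι]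

theorem Order.succ_reverse_induction [SuccOrder ι] [WellFoundedGT ι] {P : ι → Prop}
    (of_isMax : ∀ j, IsMax j → P j) (of_succ : ∀ j, ¬IsMax j → P (succ j) → P j) (j : ι) :
    P j :=
  WellFoundedGT.induction j fun j ih =>
    (em (IsMax j)).elim (of_isMax j) fun hj => of_succ j hj (ih _ (lt_succ_of_not_isMax hj))

theorem Finset.sum_Iic_add_sum_Ioi [Fintype ι] [LocallyFiniteOrderBot ι] [LocallyFiniteOrderTop ι]
    {M : Type*} [AddCommMonoid M] (f : ι → M) (j : ι) :
    ∑ l ∈ Iic j, f l + ∑ l ∈ Ioi j, f l = ∑ l, f l := by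
  rw [← sum_union (disjoint_left.2 fun l h₁ h₂ => (mem_Iic.1 h₁).not_gt (mem_Ioi.1 h₂))]
  congr 1
  ext l
  simpa using le_or_gt l j

theorem Finset.sum_Ioi_eq_add_sum_Ioi_succ [SuccOrder ι] [LocallyFiniteOrderTop ι]
    {M : Type*} [AddCommMonoid M] (f : ι → M) {j : ι} (hj : ¬IsMax j) :
    ∑ l ∈ Ioi j, f l = f (succ j) + ∑ l ∈ Ioi (succ j), f l := by
  rw [← Ici_succ_eq_Ioi_of_not_isMax hj, add_sum_Ioi_eq_sum_Ici]

theorem Finset.sum_Iic_succ_eq_add_sum_Iic [SuccOrder ι] [LocallyFiniteOrderBot ι]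
    {M : Type*} [AddCommMonoid M] (f : ι → M) {j : ι} (hj : ¬IsMax j) :
    ∑ l ∈ Iic (succ j), f l = f (succ j) + ∑ l ∈ Iic j, f l := by
  rw [← add_sum_Iio_eq_sum_Iic, Iio_succ_eq_Iic_of_not_isMax hj]

theorem Finset.sum_Iic_of_isMin [LocallyFiniteOrderBot ι] {M : Type*} [AddCommMonoid M]
    (f : ι → M) {j : ι} (hj : IsMin j) : ∑ l ∈ Iic j, f l = f j := by
  rw [← add_sum_Iio_eq_sum_Iic, Iio_eq_empty.2 hj, sum_empty, add_zero]

variable [LocallyFiniteOrderTop ι]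

def IsGreedyAllocation (u y v : ι → ℕ) : Prop :=
  ∀ j, v j = min (y j) (u j + (∑ l ∈ Ioi j, u l - ∑ l ∈ Ioi j, v l))

namespace IsGreedyAllocation

variable {u y v : ι → ℕ}

theorem sum_Ioi_le [SuccOrder ι] [WellFoundedGT ι] (hv : IsGreedyAllocation u y v) (j : ι) :
    ∑ l ∈ Ioi j, v l ≤ ∑ l ∈ Ioi j, u l := by
  induction j using Order.succ_reverse_induction with
  | of_isMax j hj => simp [Ioi_eq_empty.2 hj]
  | of_succ j hj ih =>
    rw [sum_Ioi_eq_add_sum_Ioi_succ _ hj, sum_Ioi_eq_add_sum_Ioi_succ _ hj]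
    have := hv (succ j)
    omega

theorem sum_Ioi_add_sum_Iic_le [SuccOrder ι] [WellFoundedGT ι] [LocallyFiniteOrderBot ι]
    (hu : ∀ j, ∑ l ∈ Iic j, u l ≤ ∑ l ∈ Iic j, y l) (hv : IsGreedyAllocation u y v) (j : ι) :
    ∑ l ∈ Ioi j, u l + ∑ l ∈ Iic j, u l ≤ ∑ l ∈ Ioi j, v l + ∑ l ∈ Iic j, y l := by
  induction j using Order.succ_reverse_induction with
  | of_isMax j hj => simpa [Ioi_eq_empty.2 hj] using hu j
  | of_succ j hj ih =>
    rw [sum_Iic_succ_eq_add_sum_Iic _ hj, sum_Iic_succ_eq_add_sum_Iic _ hj] at ih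
    rw [sum_Ioi_eq_add_sum_Ioi_succ _ hj, sum_Ioi_eq_add_sum_Ioi_succ _ hj]
    have := hv (succ j)
    have := hu j
    omega

variable [Fintype ι] [SuccOrder ι] [LocallyFiniteOrderBot ι]

theorem sum_eq (hu : ∀ j, ∑ l ∈ Iic j, u l ≤ ∑ l ∈ Iic j, y l)
    (hv : IsGreedyAllocation u y v) : ∑ l, v l = ∑ l, u l := by
  cases isEmpty_or_nonempty ι
  · simp
  obtain ⟨j, hj⟩ := Finite.exists_min (id : ι → ι)
  have hmin : IsMin j := fun l _ => hj l
  have hu_split := sum_Iic_add_sum_Ioi u j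
  have hv_split := sum_Iic_add_sum_Ioi v j
  have hbound := hv.sum_Ioi_add_sum_Iic_le hu j
  rw [sum_Iic_of_isMin _ hmin] at hu_split hv_split
  rw [sum_Iic_of_isMin _ hmin, sum_Iic_of_isMin _ hmin] at hbound
  have := hv j
  have := hv.sum_Ioi_le j
  omega

theorem sum_Iic_le (hu : ∀ j, ∑ l ∈ Iic j, u l ≤ ∑ l ∈ Iic j, y l)
    (hv : IsGreedyAllocation u y v) (j : ι) : ∑ l ∈ Iic j, u l ≤ ∑ l ∈ Iic j, v l := by
  have := sum_Iic_add_sum_Ioi u j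
  have := sum_Iic_add_sum_Ioi v j
  have := hv.sum_eq hu
  have := hv.sum_Ioi_le j
  omega

end IsGreedyAllocation

end GreedyAllocation

theorem stmt2_general (k : ℕ) (u y v : Fin k → ℕ)
    (hu : ∀ j : Fin k, (∑ l ∈ Finset.Iic j, u l) ≤ (∑ l ∈ Finset.Iic j, y l))
    (hv : ∀ j : Fin k,
      v j = min (y j)
        (u j + ((∑ l ∈ Finset.Ioi j, u l) - (∑ l ∈ Finset.Ioi j, v l)))) :
    (∀ j : Fin k, v j ≤ y j) ∧
    (∀ j : Fin k, (∑ l ∈ Finset.Iic j, u l) ≤ (∑ l ∈ Finset.Iic j, v l)) ∧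
    (∑ l : Fin k, v l) = (∑ l : Fin k, u l) := by
  have hv' : IsGreedyAllocation u y v := hv
  exact ⟨fun j => (hv j).trans_le (min_le_left _ _), hv'.sum_Iic_le hu, hv'.sum_eq hu⟩

/-- The top-down recursively defined allocation vector `v*` with
`v* j = min (y j) (u j + (∑_{l>j} u l − ∑_{l>j} v* l))` (for `j = k` the `Ioi` sum is empty,
so `v* k = min (u k) (y k)`) satisfies: (i) `v* j ≤ y j`; (ii) prefix dominance
`∑_{l≤j} u l ≤ ∑_{l≤j} v* l`; (iii) total conservation `∑ v* = ∑ u`. -/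
theorem stmt2 (k : ℕ) (hk : 1 ≤ k) (u y v : Fin k → ℕ)
    (hu : ∀ j : Fin k, (∑ l ∈ Finset.Iic j, u l) ≤ (∑ l ∈ Finset.Iic j, y l))
    (hv : ∀ j : Fin k,
      v j = min (y j)
        (u j + ((∑ l ∈ Finset.Ioi j, u l) - (∑ l ∈ Finset.Ioi j, v l)))) :
    (∀ j : Fin k, v j ≤ y j) ∧
    (∀ j : Fin k, (∑ l ∈ Finset.Iic j, u l) ≤ (∑ l ∈ Finset.Iic j, v l)) ∧
    (∑ l : Fin k, v l) = (∑ l : Fin k, u l) :=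
  stmt2_general k u y v hu hv
end

section
/- Let k ≥ 1 and u, y : Fin k → ℕ with ∑_{l ≤ j} u l ≤ ∑_{l ≤ j} y l for all j. Define V(u,y) = { v : Fin k → ℕ | ∀ j, v j ≤ y j; ∀ j < k, ∑_{l ≤ j} u l ≤ ∑_{l ≤ j} v l; and ∑_{l=1}^k v l = ∑_{l=1}^k u l }. For any v ∈ V(u,y) with v ≠ v* (where v* is defined by the top-down recursion v*(k)=min(u k, y k), v*(j)=min(y j, u j + ∑_{l>j}u l − ∑_{l>j}v* l)), letting j be the largest index with v j ≠ v* j, we have v j < v* j. -/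
/-!
Beyond the last disagreement `j`, `v` and `v*` coincide, so both have the same tail sum
`∑_{l>j} v l`. Since `v` has total `∑ u` and its prefix up to `j - 1` already dominates that
of `u`, the entry `v j` is at most `u j + ∑_{l>j} u l - ∑_{l>j} v l`; it is also at most
`y j`. These are exactly the two terms of the minimum defining `v* j`, so `v j ≤ v* j`.
-/

open Finset

namespace Finset

variable {α M : Type*} [LinearOrder α]

theorem sum_Iio_le_sum_Iio_of_forall_sum_Iic_le [LocallyFiniteOrderBot α] [PredOrder α]
    [AddCommMonoid M] [Preorder M] {f g : α → M}
    (h : ∀ i, ∑ l ∈ Iic i, f l ≤ ∑ l ∈ Iic i, g l) (j : α) :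
    ∑ l ∈ Iio j, f l ≤ ∑ l ∈ Iio j, g l := by
  by_cases hj : IsMin j
  · simp [Iio_eq_empty.2 hj]
  · rw [← Iic_pred_eq_Iio_of_not_isMin hj]
    exact h _

theorem sum_univ_eq_sum_Iio_add_add_sum_Ioi [Fintype α] [LocallyFiniteOrderBot α]
    [LocallyFiniteOrderTop α] [AddCommMonoid M] (f : α → M) (j : α) :
    ∑ l, f l = ∑ l ∈ Iio j, f l + f j + ∑ l ∈ Ioi j, f l := by
  have hsplit : (univ : Finset α) = Iic j ∪ Ioi j := by
    ext l
    simp [le_or_gt]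
  rw [hsplit, sum_union (disjoint_left.2 fun l hl hl' => (mem_Iic.1 hl).not_gt (mem_Ioi.1 hl')),
    Iic_eq_cons_Iio, sum_cons, add_comm (f j)]

end Finset

theorem le_add_sum_Ioi_tsub_of_forall_sum_Iic_le {α : Type*} [LinearOrder α] [Fintype α]
    [LocallyFiniteOrderBot α] [LocallyFiniteOrderTop α] [PredOrder α] {f g : α → ℕ}
    (hprefix : ∀ i, ∑ l ∈ Iic i, f l ≤ ∑ l ∈ Iic i, g l) (htotal : ∑ l, g l = ∑ l, f l)
    (j : α) :
    g j ≤ f j + (∑ l ∈ Ioi j, f l - ∑ l ∈ Ioi j, g l) := by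
  have hIio := sum_Iio_le_sum_Iio_of_forall_sum_Iic_le hprefix j
  rw [sum_univ_eq_sum_Iio_add_add_sum_Ioi g j, sum_univ_eq_sum_Iio_add_add_sum_Ioi f j] at htotal
  omega

theorem stmt3_general (k : ℕ) (u y v vstar : Fin k → ℕ)
    (hvstar : ∀ j : Fin k,
      vstar j = min (y j)
        (u j + ((∑ l ∈ Finset.Ioi j, u l) - (∑ l ∈ Finset.Ioi j, vstar l))))
    (hv1 : ∀ j : Fin k, v j ≤ y j)
    (hv2 : ∀ j : Fin k, (∑ l ∈ Finset.Iic j, u l) ≤ (∑ l ∈ Finset.Iic j, v l))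
    (hv3 : (∑ l : Fin k, v l) = (∑ l : Fin k, u l))
    (j : Fin k) (hj : v j ≠ vstar j) (hjmax : ∀ l : Fin k, j < l → v l = vstar l) :
    v j < vstar j := by
  have htail : ∑ l ∈ Ioi j, vstar l = ∑ l ∈ Ioi j, v l :=
    sum_congr rfl fun l hl => (hjmax l (mem_Ioi.1 hl)).symm
  have hle : v j ≤ vstar j := by
    rw [hvstar j, htail]
    exact le_min (hv1 j) (le_add_sum_Ioi_tsub_of_forall_sum_Iic_le hv2 hv3 j)
  exact hle.lt_of_ne hj

/-- For any `v ∈ V(u,y)` with `v ≠ v*`, at the largest index `j` where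
`v j ≠ v* j` we must have `v j < v* j`. Here `v*` is the top-down recursive solution. -/
theorem stmt3 (k : ℕ) (hk : 1 ≤ k) (u y v vstar : Fin k → ℕ)
    (hu : ∀ j : Fin k, (∑ l ∈ Finset.Iic j, u l) ≤ (∑ l ∈ Finset.Iic j, y l))
    (hvstar : ∀ j : Fin k,
      vstar j = min (y j)
        (u j + ((∑ l ∈ Finset.Ioi j, u l) - (∑ l ∈ Finset.Ioi j, vstar l))))
    (hv1 : ∀ j : Fin k, v j ≤ y j)
    (hv2 : ∀ j : Fin k, (∑ l ∈ Finset.Iic j, u l) ≤ (∑ l ∈ Finset.Iic j, v l))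
    (hv3 : (∑ l : Fin k, v l) = (∑ l : Fin k, u l))
    (hne : v ≠ vstar)
    (j : Fin k) (hj : v j ≠ vstar j) (hjmax : ∀ l : Fin k, j < l → v l = vstar l) :
    v j < vstar j :=
  stmt3_general k u y v vstar hvstar hv1 hv2 hv3 j hj hjmax
end

section
/- Let k ≥ 1 and let F : (Fin k → ℕ) → ℝ be a function on residual supply profiles satisfying the monotonicity property: whenever z, z' differ only in coordinates i < j with z i = z' i + 1 and z j = z' j − 1 (and agree elsewhere), F z ≥ F z'. Fix y, u with u feasible for y, and let v* be the top-down recursive solution. Then for every v ∈ V(u,y), F(y − v*) ≥ F(y − v), i.e., v* maximizes v ↦ F(y − v) over V(u,y). -/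
/-!
Say that `z` dominates `z'` when every prefix sum of `z` is at least the corresponding one of
`z'` and the totals agree. A function that grows when one unit moves to a lower index grows
along dominance: if `j` is the first index where `z'` exceeds `z`, some `i < j` has
`z' i < z i`, and moving one unit of `z'` from `j` to `i` keeps it dominated by `z` while
decreasing `∑ (z - z')`.

In terms of the suffix sums `S n` of `v*` and `U n` of `u`, the recursion reads
`S n = min (y n + S (n + 1)) (U n)`. The suffix sums of any `v ∈ V(u,y)` obey both bounds, so
they are at most `S n`, while the prefix condition on `u` forces `S 0 = U 0`. Hence `y - v*`
dominates `y - v`.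
-/

open Finset

section Shift

variable {ι : Type*} [LinearOrder ι]

def ShiftMonotone {β : Type*} [Preorder β] (F : (ι → ℕ) → β) : Prop :=
  ∀ z z' : ι → ℕ, ∀ i j : ι, i < j → z i = z' i + 1 → z' j = z j + 1 →
    (∀ l, l ≠ i → l ≠ j → z l = z' l) → F z' ≤ F z

/-- Truncated subtraction: this moves a unit from `j` to `i` only when `1 ≤ z j`. -/
def shiftUnit (z : ι → ℕ) (i j : ι) : ι → ℕ := z + Pi.single i 1 - Pi.single j 1

variable {z z' : ι → ℕ} {i j : ι}

lemma shiftUnit_apply (l : ι) :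
    shiftUnit z i j l = z l + (if l = i then 1 else 0) - (if l = j then 1 else 0) := by
  simp [shiftUnit, Pi.single_apply]

lemma sum_shiftUnit_add (hij : i ≠ j) (hj : 1 ≤ z j) (s : Finset ι) :
    ∑ l ∈ s, shiftUnit z i j l + (if j ∈ s then 1 else 0) =
      ∑ l ∈ s, z l + (if i ∈ s then 1 else 0) := by
  have h : shiftUnit z i j + Pi.single j 1 = z + Pi.single i 1 := by
    ext l
    rw [Pi.add_apply, Pi.add_apply, shiftUnit_apply, Pi.single_apply, Pi.single_apply]
    split_ifs <;> subst_vars <;> omega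
  simpa only [Pi.add_apply, sum_add_distrib, sum_pi_single'] using
    congrArg (fun w => ∑ l ∈ s, w l) h

lemma sum_tsub_shiftUnit_lt [Fintype ι] (hij : i ≠ j) (hi : z' i < z i) (hj : z j < z' j) :
    ∑ l, (z l - shiftUnit z' i j l) < ∑ l, (z l - z' l) := by
  refine sum_lt_sum (fun l _ => ?_) ⟨i, mem_univ i, ?_⟩ <;> rw [shiftUnit_apply]
  · split_ifs <;> subst_vars <;> omega
  · rw [if_pos rfl, if_neg hij]
    omega

variable [LocallyFiniteOrderBot ι]

lemma sum_Iic_shiftUnit_le (hij : i < j) (hz'j : 1 ≤ z' j) (hzi : z' i < z i)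
    (below_j : ∀ l < j, z' l ≤ z l) (hpre : ∀ m, ∑ l ∈ Iic m, z' l ≤ ∑ l ∈ Iic m, z l) (m : ι) :
    ∑ l ∈ Iic m, shiftUnit z' i j l ≤ ∑ l ∈ Iic m, z l := by
  have h := sum_shiftUnit_add hij.ne hz'j (Iic m)
  simp only [mem_Iic] at h
  by_cases hjm : j ≤ m
  · rw [if_pos hjm, if_pos (hij.le.trans hjm)] at h
    linarith [hpre m]
  by_cases him : i ≤ m
  · have : ∑ l ∈ Iic m, z' l < ∑ l ∈ Iic m, z l :=
      sum_lt_sum (fun l hl => below_j l ((mem_Iic.1 hl).trans_lt (not_le.1 hjm)))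
        ⟨i, mem_Iic.2 him, hzi⟩
    rw [if_neg hjm, if_pos him] at h
    omega
  · rw [if_neg hjm, if_neg him] at h
    linarith [hpre m]

end Shift

theorem ShiftMonotone.le_of_sum_Iic_le {ι β : Type*} [LinearOrder ι] [LocallyFiniteOrderBot ι]
    [Fintype ι] [Preorder β] {F : (ι → ℕ) → β} (hF : ShiftMonotone F) {z z' : ι → ℕ}
    (hpre : ∀ m, ∑ l ∈ Iic m, z' l ≤ ∑ l ∈ Iic m, z l)
    (htot : ∑ l, z' l = ∑ l, z l) : F z' ≤ F z := by
  by_cases hle : ∀ l, z' l ≤ z l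
  · obtain rfl : z' = z := funext fun l =>
      (sum_eq_sum_iff_of_le fun l _ => hle l).1 htot l (mem_univ l)
    exact le_rfl
  push Not at hle
  obtain ⟨j, hj : z j < z' j, hj_min⟩ := wellFounded_lt.has_min {l | z l < z' l} hle
  have below_j : ∀ l < j, z' l ≤ z l := fun l hl => not_lt.1 fun h => hj_min l h hl
  obtain ⟨i, hi, hzi⟩ : ∃ i ∈ Iio j, z' i < z i := by
    apply exists_lt_of_sum_lt
    have := hpre j
    rw [Iic_eq_cons_Iio, sum_cons, sum_cons] at this
    exact lt_of_add_lt_add_left (this.trans_lt (add_lt_add_left hj _))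
  have hij : i < j := mem_Iio.1 hi
  have hz'j : 1 ≤ z' j := by omega
  have htot' : ∑ l, shiftUnit z' i j l = ∑ l, z l := by
    have := sum_shiftUnit_add hij.ne hz'j univ
    simp only [mem_univ, if_true] at this
    omega
  have hstep : F z' ≤ F (shiftUnit z' i j) := by
    refine hF _ z' i j hij ?_ ?_ fun l hli hlj => ?_ <;> rw [shiftUnit_apply]
    · simp [hij.ne]
    · simp [hij.ne']; omega
    · simp [hli, hlj]
  exact hstep.trans <| hF.le_of_sum_Iic_le
    (sum_Iic_shiftUnit_le hij hz'j hzi below_j hpre) htot'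
termination_by ∑ l, (z l - z' l)
decreasing_by exact sum_tsub_shiftUnit_lt hij.ne hzi hj

section PartialSums

variable {k : ℕ}

def sumBelow (w : Fin k → ℕ) (n : ℕ) : ℕ := ∑ l : Fin k with l.val < n, w l

def sumFrom (w : Fin k → ℕ) (n : ℕ) : ℕ := ∑ l : Fin k with n ≤ l.val, w l

variable (w : Fin k → ℕ) {n : ℕ}

lemma sumBelow_add_sumFrom (n : ℕ) : sumBelow w n + sumFrom w n = ∑ l, w l := by
  simpa only [sumBelow, sumFrom, not_lt] using
    sum_filter_add_sum_filter_not univ (fun l : Fin k => l.val < n) w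

lemma sumBelow_zero : sumBelow w 0 = 0 := by
  simp [sumBelow]

lemma sumFrom_zero : sumFrom w 0 = ∑ l, w l := by
  simp [sumFrom]

lemma sumFrom_eq_zero (h : k ≤ n) : sumFrom w n = 0 :=
  sum_eq_zero fun l hl => absurd ((mem_filter.1 hl).2.trans_lt l.isLt) (not_lt.2 h)

lemma sumFrom_eq_add (h : n < k) : sumFrom w n = w ⟨n, h⟩ + sumFrom w (n + 1) := by
  have : univ.filter (fun l : Fin k => n ≤ l.val) =
      insert ⟨n, h⟩ (univ.filter fun l : Fin k => n + 1 ≤ l.val) := by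
    ext l
    simp only [mem_filter, mem_univ, true_and, mem_insert, Fin.ext_iff]
    omega
  rw [sumFrom, this, sum_insert (by simp), sumFrom]

lemma sumBelow_eq_sum (h : k ≤ n) : sumBelow w n = ∑ l, w l := by
  rw [← sumBelow_add_sumFrom w n, sumFrom_eq_zero w h, add_zero]

lemma sum_Iic_eq_sumBelow (j : Fin k) : ∑ l ∈ Iic j, w l = sumBelow w (j + 1) := by
  refine sum_congr (Finset.ext fun l => ?_) fun _ _ => rfl
  simp only [mem_Iic, mem_filter, mem_univ, true_and, Fin.le_def]
  omega

lemma sum_Ioi_eq_sumFrom (j : Fin k) : ∑ l ∈ Ioi j, w l = sumFrom w (j + 1) := by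
  refine sum_congr (Finset.ext fun l => ?_) fun _ _ => rfl
  simp only [mem_Ioi, mem_filter, mem_univ, true_and, Fin.lt_def]
  omega

variable {w}

lemma sumBelow_le_sumBelow_iff {w' : Fin k → ℕ} (htot : ∑ l, w l = ∑ l, w' l) :
    sumBelow w n ≤ sumBelow w' n ↔ sumFrom w' n ≤ sumFrom w n := by
  have := sumBelow_add_sumFrom w n
  have := sumBelow_add_sumFrom w' n
  omega

lemma sumBelow_le_of_sum_Iic_le {w' : Fin k → ℕ}
    (h : ∀ m : Fin k, ∑ l ∈ Iic m, w l ≤ ∑ l ∈ Iic m, w' l) (n : ℕ) :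
    sumBelow w n ≤ sumBelow w' n := by
  rcases n with _ | n
  · simp [sumBelow_zero]
  by_cases hn : n < k
  · simpa only [sum_Iic_eq_sumBelow] using h ⟨n, hn⟩
  rw [sumBelow_eq_sum w (by omega), sumBelow_eq_sum w' (by omega)]
  rcases k with _ | k
  · simp
  · simpa only [sum_Iic_eq_sumBelow, Fin.val_last, sumBelow_eq_sum _ le_rfl] using h (Fin.last k)

end PartialSums

section TopDown

variable {k : ℕ}

def IsTopDown (u y vstar : Fin k → ℕ) : Prop :=
  ∀ j : Fin k, vstar j = min (y j) (u j + (sumFrom u (j + 1) - sumFrom vstar (j + 1)))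

variable {u y vstar : Fin k → ℕ} {n : ℕ}

namespace IsTopDown

lemma apply_mk (h : IsTopDown u y vstar) (hn : n < k) :
    vstar ⟨n, hn⟩ = min (y ⟨n, hn⟩) (u ⟨n, hn⟩ + (sumFrom u (n + 1) - sumFrom vstar (n + 1))) :=
  h ⟨n, hn⟩

lemma sumFrom_le (h : IsTopDown u y vstar) (hn : n ≤ k) : sumFrom vstar n ≤ sumFrom u n := by
  induction hn using Nat.decreasingInduction with
  | self => simp [sumFrom_eq_zero _ le_rfl]
  | of_succ n hn ih =>
    rw [sumFrom_eq_add _ hn, sumFrom_eq_add _ hn, h.apply_mk hn]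
    omega

lemma sumFrom_eq_min (h : IsTopDown u y vstar) (hn : n < k) :
    sumFrom vstar n = min (y ⟨n, hn⟩ + sumFrom vstar (n + 1)) (sumFrom u n) := by
  have := h.sumFrom_le (n := n + 1) hn
  rw [sumFrom_eq_add _ hn, sumFrom_eq_add _ hn, h.apply_mk hn]
  omega

lemma sumFrom_le_sumFrom (h : IsTopDown u y vstar) {v : Fin k → ℕ} (hvy : ∀ m, v m ≤ y m)
    (hvu : ∀ n, sumFrom v n ≤ sumFrom u n) (hn : n ≤ k) : sumFrom v n ≤ sumFrom vstar n := by
  induction hn using Nat.decreasingInduction with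
  | self => simp [sumFrom_eq_zero _ le_rfl]
  | of_succ n hn ih =>
    rw [h.sumFrom_eq_min hn, sumFrom_eq_add _ hn]
    exact le_min (add_le_add (hvy _) ih) (sumFrom_eq_add v hn ▸ hvu n)

lemma sum_le_sumBelow_add_sumFrom (h : IsTopDown u y vstar)
    (hu : ∀ n, sumBelow u n ≤ sumBelow y n) (hn : n ≤ k) :
    ∑ l, u l ≤ sumBelow y n + sumFrom vstar n := by
  induction hn using Nat.decreasingInduction with
  | self => simpa [sumFrom_eq_zero _ le_rfl, ← sumBelow_eq_sum u le_rfl] using hu k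
  | of_succ n hn ih =>
    have := sumFrom_eq_add y hn
    have := sumBelow_add_sumFrom y n
    have := sumBelow_add_sumFrom y (n + 1)
    have := sumBelow_add_sumFrom u n
    have := hu n
    rw [h.sumFrom_eq_min hn]
    omega

lemma sum_eq (h : IsTopDown u y vstar) (hu : ∀ n, sumBelow u n ≤ sumBelow y n) :
    ∑ l, vstar l = ∑ l, u l := by
  have h0 := h.sum_le_sumBelow_add_sumFrom hu k.zero_le
  have h1 := h.sumFrom_le k.zero_le
  rw [sumBelow_zero, zero_add, sumFrom_zero] at h0
  rw [sumFrom_zero, sumFrom_zero] at h1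
  omega

end IsTopDown

end TopDown

theorem stmt5_general (k : ℕ) (F : (Fin k → ℕ) → ℝ)
    (hF : ∀ z z' : Fin k → ℕ, ∀ i j : Fin k, i < j →
      z i = z' i + 1 → z' j = z j + 1 → (∀ l : Fin k, l ≠ i → l ≠ j → z l = z' l) →
      F z' ≤ F z)
    (u y vstar : Fin k → ℕ)
    (hu : ∀ j : Fin k, (∑ l ∈ Finset.Iic j, u l) ≤ (∑ l ∈ Finset.Iic j, y l))
    (hvstar : ∀ j : Fin k,
      vstar j = min (y j)
        (u j + ((∑ l ∈ Finset.Ioi j, u l) - (∑ l ∈ Finset.Ioi j, vstar l)))) :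
    ∀ v : Fin k → ℕ,
      (∀ m : Fin k, v m ≤ y m) →
      (∀ m : Fin k, (∑ l ∈ Finset.Iic m, u l) ≤ (∑ l ∈ Finset.Iic m, v l)) →
      ((∑ l : Fin k, v l) = (∑ l : Fin k, u l)) →
      F (fun l => y l - v l) ≤ F (fun l => y l - vstar l) := by
  intro v hvy hvu hvtot
  have htd : IsTopDown u y vstar := by
    simpa only [IsTopDown, sum_Ioi_eq_sumFrom] using hvstar
  have hvstar_le : ∀ l, vstar l ≤ y l := fun l => htd l ▸ min_le_left _ _
  have hvstar_tot : ∑ l, vstar l = ∑ l, u l := htd.sum_eq (sumBelow_le_of_sum_Iic_le hu)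
  have hprefix (m : Fin k) : ∑ l ∈ Iic m, vstar l ≤ ∑ l ∈ Iic m, v l := by
    rw [sum_Iic_eq_sumBelow, sum_Iic_eq_sumBelow,
      sumBelow_le_sumBelow_iff (hvstar_tot.trans hvtot.symm)]
    exact htd.sumFrom_le_sumFrom hvy
      (fun n => (sumBelow_le_sumBelow_iff hvtot.symm).1 (sumBelow_le_of_sum_Iic_le hvu n))
      m.isLt
  refine ShiftMonotone.le_of_sum_Iic_le hF (fun m => ?_) ?_ <;>
    rw [sum_tsub_distrib _ fun l _ => hvy l, sum_tsub_distrib _ fun l _ => hvstar_le l]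
  · exact Nat.sub_le_sub_left (hprefix m) _
  · rw [hvtot, hvstar_tot]

/-- If `F` on residual supply profiles is monotone with respect to shifting one
unit of supply from a higher-indexed variety `j` to a lower-indexed variety `i < j`, then the
top-down recursive solution `v*` maximizes `v ↦ F (y − v)` over the feasibility set `V(u,y)`. -/
theorem stmt5 (k : ℕ) (hk : 1 ≤ k) (F : (Fin k → ℕ) → ℝ)
    (hF : ∀ z z' : Fin k → ℕ, ∀ i j : Fin k, i < j →
      z i = z' i + 1 → z' j = z j + 1 → (∀ l : Fin k, l ≠ i → l ≠ j → z l = z' l) →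
      F z' ≤ F z)
    (u y vstar : Fin k → ℕ)
    (hu : ∀ j : Fin k, (∑ l ∈ Finset.Iic j, u l) ≤ (∑ l ∈ Finset.Iic j, y l))
    (hvstar : ∀ j : Fin k,
      vstar j = min (y j)
        (u j + ((∑ l ∈ Finset.Ioi j, u l) - (∑ l ∈ Finset.Ioi j, vstar l)))) :
    ∀ v : Fin k → ℕ,
      (∀ m : Fin k, v m ≤ y m) →
      (∀ m : Fin k, (∑ l ∈ Finset.Iic m, u l) ≤ (∑ l ∈ Finset.Iic m, v l)) →
      ((∑ l : Fin k, v l) = (∑ l : Fin k, u l)) →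
      F (fun l => y l - v l) ≤ F (fun l => y l - vstar l) :=
  stmt5_general k F hF u y vstar hu hvstar
end

section
/- Let k ≥ 1, let h be a finite multiset of consumer types with flexibility levels in Fin k and real virtual valuations, and let y, z : Fin k → ℕ be supply profiles with ∑_{l ≤ j} y l ≥ ∑_{l ≤ j} z l for all j. Define the one-step value W(h, y) = max over feasible service vectors u (u j ≤ n j(h), ∑_{l ≤ j} u l ≤ ∑_{l ≤ j} y l for all j) of ∑_j (sum of the u j largest virtual valuations among level-j consumers in h). Then W(h, y) ≥ W(h, z). -/
/-- Sum of the `m` largest elements of a finite multiset of reals, expressed as the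
supremum of sums of sub-multisets of cardinality `m`. -/
noncomputable def topSum (s : Multiset ℝ) (m : ℕ) : ℝ :=
  sSup {r : ℝ | ∃ t : Multiset ℝ, t ≤ s ∧ Multiset.card t = m ∧ r = t.sum}

/-- One-step (terminal-time) optimal virtual surplus: the supremum over feasible service
vectors `u` (with `u j` at most the number of level-`j` consumers in `h` and prefix-sum
supply constraints w.r.t. `y`) of the sum over levels `j` of the `u j` largest virtual
valuations among level-`j` consumers. -/
noncomputable def oneStepValue (k : ℕ) (h : Multiset (Fin k × ℝ)) (y : Fin k → ℕ) : ℝ :=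
  sSup {r : ℝ | ∃ u : Fin k → ℕ,
    (∀ j : Fin k, u j ≤ Multiset.card (h.filter (fun c => c.1 = j))) ∧
    (∀ j : Fin k, (∑ l ∈ Finset.Iic j, u l) ≤ (∑ l ∈ Finset.Iic j, y l)) ∧
    r = ∑ j : Fin k, topSum ((h.filter (fun c => c.1 = j)).map Prod.snd) (u j)}

/-
Every service vector feasible under `z` is feasible under `y`, since the prefix-sum
constraints of `y` are weaker. So `W(h, z)` is the supremum of a subset of the values
defining `W(h, y)`, and the larger set is bounded above (each `topSum` is at most the sum
of absolute values), so its supremum is at least as large.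
-/

def surplusSet (k : ℕ) (h : Multiset (Fin k × ℝ)) (y : Fin k → ℕ) : Set ℝ :=
  {r : ℝ | ∃ u : Fin k → ℕ,
    (∀ j : Fin k, u j ≤ Multiset.card (h.filter (fun c => c.1 = j))) ∧
    (∀ j : Fin k, (∑ l ∈ Finset.Iic j, u l) ≤ (∑ l ∈ Finset.Iic j, y l)) ∧
    r = ∑ j : Fin k, topSum ((h.filter (fun c => c.1 = j)).map Prod.snd) (u j)}

theorem oneStepValue_eq_sSup_surplusSet (k : ℕ) (h : Multiset (Fin k × ℝ)) (y : Fin k → ℕ) :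
    oneStepValue k h y = sSup (surplusSet k h y) :=
  rfl

theorem Multiset.sum_le_sum_map_abs_of_le {α : Type*} [AddCommGroup α] [LinearOrder α]
    [IsOrderedAddMonoid α] {s t : Multiset α} (hts : t ≤ s) :
    t.sum ≤ (s.map abs).sum := by
  obtain ⟨u, rfl⟩ := Multiset.le_iff_exists_add.mp hts
  calc t.sum ≤ |t.sum| := le_abs_self _
    _ ≤ (t.map abs).sum := Multiset.abs_sum_le_sum_abs
    _ ≤ (t.map abs).sum + (u.map abs).sum :=
      le_add_of_nonneg_right (Multiset.sum_nonneg fun x hx => by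
        obtain ⟨a, -, rfl⟩ := Multiset.mem_map.mp hx
        exact abs_nonneg a)
    _ = ((t + u).map abs).sum := by rw [Multiset.map_add, Multiset.sum_add]

theorem topSum_le_sum_map_abs (s : Multiset ℝ) (m : ℕ) : topSum s m ≤ (s.map abs).sum := by
  refine Real.sSup_le ?_ (Multiset.sum_nonneg fun x hx => ?_)
  · rintro r ⟨t, hts, -, rfl⟩
    exact Multiset.sum_le_sum_map_abs_of_le hts
  · obtain ⟨a, -, rfl⟩ := Multiset.mem_map.mp hx
    exact abs_nonneg a

theorem bddAbove_surplusSet (k : ℕ) (h : Multiset (Fin k × ℝ)) (y : Fin k → ℕ) :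
    BddAbove (surplusSet k h y) := by
  refine ⟨∑ j : Fin k, (((h.filter (fun c => c.1 = j)).map Prod.snd).map abs).sum, ?_⟩
  rintro r ⟨u, -, -, rfl⟩
  exact Finset.sum_le_sum fun j _ => topSum_le_sum_map_abs _ _

theorem zero_mem_surplusSet (k : ℕ) (h : Multiset (Fin k × ℝ)) (y : Fin k → ℕ) :
    ∑ j : Fin k, topSum ((h.filter (fun c => c.1 = j)).map Prod.snd) 0 ∈ surplusSet k h y :=
  ⟨0, fun _ => Nat.zero_le _, fun _ => by simp, rfl⟩

theorem surplusSet_mono (k : ℕ) (h : Multiset (Fin k × ℝ)) {y z : Fin k → ℕ}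
    (hyz : ∀ j : Fin k, (∑ l ∈ Finset.Iic j, z l) ≤ (∑ l ∈ Finset.Iic j, y l)) :
    surplusSet k h z ⊆ surplusSet k h y := by
  rintro r ⟨u, hu_card, hu_supply, rfl⟩
  exact ⟨u, hu_card, fun j => (hu_supply j).trans (hyz j), rfl⟩

theorem stmt6_general (k : ℕ) (h : Multiset (Fin k × ℝ)) (y z : Fin k → ℕ)
    (hyz : ∀ j : Fin k, (∑ l ∈ Finset.Iic j, z l) ≤ (∑ l ∈ Finset.Iic j, y l)) :
    oneStepValue k h z ≤ oneStepValue k h y := by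
  rw [oneStepValue_eq_sSup_surplusSet, oneStepValue_eq_sSup_surplusSet]
  exact csSup_le_csSup (bddAbove_surplusSet k h y) ⟨_, zero_mem_surplusSet k h z⟩
    (surplusSet_mono k h hyz)

/-- If the supply profile `y` dominates `z` in all prefix sums, then the
one-step optimal virtual surplus under `y` is at least that under `z`. -/
theorem stmt6 (k : ℕ) (hk : 1 ≤ k) (h : Multiset (Fin k × ℝ)) (y z : Fin k → ℕ)
    (hyz : ∀ j : Fin k, (∑ l ∈ Finset.Iic j, z l) ≤ (∑ l ∈ Finset.Iic j, y l)) :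
    oneStepValue k h z ≤ oneStepValue k h y :=
  stmt6_general k h y z hyz
end

section
/- Let Θ = [θmin, θmax] ⊂ ℝ and let Q : Θ → ℝ be nondecreasing with 0 ≤ Q ≤ 1. Define the payment P(r) = r·Q(r) − ∫_{θmin}^{r} Q(s) ds − θmin·Q(θmin). Then for all true values θ ∈ Θ and all reports r ∈ Θ: θ·Q(θ) − P(θ) ≥ θ·Q(r) − P(r). That is, truthful reporting maximizes the consumer's utility under the Myerson payment rule. -/
open intervalIntegral

/-! Truthfulness reduces to the single-crossing inequality `(θ - r) Q(r) ≤ ∫_r^θ Q`: the gain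
from reporting `θ` instead of `r` is the integral of `Q` over `[r, θ]`, while the misreport only
earns `Q(r)` per unit of that interval, and `Q` lies above `Q(r)` to the right of `r` and below
it to the left. -/

theorem MonotoneOn.sub_mul_le_integral {f : ℝ → ℝ} {r θ : ℝ} (hf : MonotoneOn f (Set.uIcc r θ)) :
    (θ - r) * f r ≤ ∫ x in r..θ, f x := by
  have hr : r ∈ Set.uIcc r θ := Set.left_mem_uIcc
  rcases le_total r θ with h | h
  · have hle : ∫ _ in r..θ, f r ≤ ∫ x in r..θ, f x :=
      integral_mono_on h intervalIntegrable_const hf.intervalIntegrable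
        fun x hx => hf hr (Set.Icc_subset_uIcc hx) hx.1
    simpa [mul_comm] using hle
  · have hle : ∫ x in θ..r, f x ≤ ∫ _ in θ..r, f r :=
      integral_mono_on h hf.intervalIntegrable.symm intervalIntegrable_const
        fun x hx => hf (Set.Icc_subset_uIcc' hx) hr hx.2
    rw [integral_symm]
    rw [integral_const, smul_eq_mul] at hle
    linarith

theorem stmt8_general (θmin θmax : ℝ) (Q P : ℝ → ℝ)
    (hmono : MonotoneOn Q (Set.Icc θmin θmax))
    (hP : ∀ r ∈ Set.Icc θmin θmax,
      P r = r * Q r - (∫ s in θmin..r, Q s) - θmin * Q θmin) :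
    ∀ θ ∈ Set.Icc θmin θmax, ∀ r ∈ Set.Icc θmin θmax,
      θ * Q r - P r ≤ θ * Q θ - P θ := by
  intro θ hθ r hr
  have hmin : θmin ∈ Set.Icc θmin θmax := ⟨le_rfl, hθ.1.trans hθ.2⟩
  have hmono_on {a b : ℝ} (ha : a ∈ Set.Icc θmin θmax) (hb : b ∈ Set.Icc θmin θmax) :
      MonotoneOn Q (Set.uIcc a b) :=
    hmono.mono (Set.uIcc_subset_Icc ha hb)
  rw [hP θ hθ, hP r hr, ← integral_add_adjacent_intervals
    (hmono_on hmin hr).intervalIntegrable (hmono_on hr hθ).intervalIntegrable]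
  linarith [(hmono_on hr hθ).sub_mul_le_integral]

/-- With a nondecreasing interim allocation `Q` taking values in `[0,1]` and the
Myerson payment `P(r) = r·Q(r) − ∫_{θmin}^r Q − θmin·Q(θmin)`, truthful reporting maximizes
utility: `θ·Q(θ) − P(θ) ≥ θ·Q(r) − P(r)` for all true values `θ` and reports `r` in `Θ`. -/
theorem stmt8 (θmin θmax : ℝ) (hθ : θmin ≤ θmax) (Q P : ℝ → ℝ)
    (hmono : MonotoneOn Q (Set.Icc θmin θmax))
    (hQ0 : ∀ x ∈ Set.Icc θmin θmax, 0 ≤ Q x)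
    (hQ1 : ∀ x ∈ Set.Icc θmin θmax, Q x ≤ 1)
    (hP : ∀ r ∈ Set.Icc θmin θmax,
      P r = r * Q r - (∫ s in θmin..r, Q s) - θmin * Q θmin) :
    ∀ θ ∈ Set.Icc θmin θmax, ∀ r ∈ Set.Icc θmin θmax,
      θ * Q r - P r ≤ θ * Q θ - P θ :=
  stmt8_general θmin θmax Q P hmono hP
end

section
/- Let Θ = [θmin, θmax], let Q : Θ → ℝ be integrable with 0 ≤ Q ≤ 1, and let P : Θ → ℝ satisfy the incentive-compatibility inequalities θ·Q(θ) − P(θ) ≥ θ·Q(r) − P(r) for all θ, r ∈ Θ, together with P(θmin) ≤ θmin·Q(θmin). Then for all r ∈ Θ: P(r) ≤ r·Q(r) − ∫_{θmin}^{r} Q(s) ds. (Payments of any incentive-compatible, individually rational scheme are bounded by the Myerson payment.) -/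
/-!
Write `U θ = θ * Q θ - P θ` for the utility of truthful reporting. Incentive compatibility says
exactly that `Q θ` is a subgradient of `U` at `θ`: `U θ + (θ' - θ) * Q θ ≤ U θ'`. Hence `Q` is
monotone, so on a uniform partition of `[θmin, r]` into `n` pieces the right Riemann sum of `Q`
dominates `∫ Q`, while the left Riemann sum is at most `U r - U θmin` by telescoping. The two sums
differ by `(r - θmin) * (Q r - Q θmin) / n`, which vanishes as `n → ∞`; individual rationality
is `U θmin ≥ 0`.
-/

open intervalIntegral Set Filter Finset Topology

theorem monotoneOn_of_subgradient {s : Set ℝ} {U Q : ℝ → ℝ}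
    (h : ∀ x ∈ s, ∀ y ∈ s, U x + (y - x) * Q x ≤ U y) : MonotoneOn Q s := by
  intro x hx y hy hxy
  rcases hxy.eq_or_lt with rfl | hlt
  · rfl
  · nlinarith [h x hx y hy, h y hy x hx]

theorem MonotoneOn.intervalIntegral_le_sum_right {f : ℝ → ℝ} {x : ℕ → ℝ} {n : ℕ}
    (hx : Monotone x) (hf : MonotoneOn f (Icc (x 0) (x n))) :
    ∫ t in x 0..x n, f t ≤ ∑ i ∈ range n, (x (i + 1) - x i) * f (x (i + 1)) := by
  have hsub : ∀ i < n, Icc (x i) (x (i + 1)) ⊆ Icc (x 0) (x n) := fun i hi =>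
    Icc_subset_Icc (hx (Nat.zero_le i)) (hx hi)
  have hint : ∀ i < n, IntervalIntegrable f MeasureTheory.volume (x i) (x (i + 1)) := fun i hi =>
    MonotoneOn.intervalIntegrable (by rw [uIcc_of_le (hx i.le_succ)]; exact hf.mono (hsub i hi))
  rw [← sum_integral_adjacent_intervals hint]
  refine sum_le_sum fun i hi => ?_
  replace hi : i < n := mem_range.1 hi
  calc ∫ t in x i..x (i + 1), f t ≤ ∫ _ in x i..x (i + 1), f (x (i + 1)) :=
        integral_mono_on (hx i.le_succ) (hint i hi) intervalIntegrable_const fun t ht =>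
          hf (hsub i hi ht) (hsub i hi (right_mem_Icc.2 (hx i.le_succ))) ht.2
    _ = (x (i + 1) - x i) * f (x (i + 1)) := by rw [integral_const, smul_eq_mul]

theorem sum_mul_le_sub_of_subgradient {U Q : ℝ → ℝ} {x : ℕ → ℝ} {n : ℕ}
    (h : ∀ i < n, U (x i) + (x (i + 1) - x i) * Q (x i) ≤ U (x (i + 1))) :
    ∑ i ∈ range n, (x (i + 1) - x i) * Q (x i) ≤ U (x n) - U (x 0) := by
  refine (sum_le_sum fun i hi => ?_).trans_eq (sum_range_sub (fun i => U (x i)) n)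
  linarith [h i (mem_range.1 hi)]

theorem intervalIntegral_le_sub_add_div_of_subgradient {a b : ℝ} {U Q : ℝ → ℝ} (hab : a ≤ b)
    (h : ∀ x ∈ Icc a b, ∀ y ∈ Icc a b, U x + (y - x) * Q x ≤ U y) {n : ℕ} (hn : 0 < n) :
    ∫ t in a..b, Q t ≤ U b - U a + (b - a) * (Q b - Q a) / n := by
  set Δ := (b - a) / n
  set x : ℕ → ℝ := fun i => a + i * Δ
  have hΔ : 0 ≤ Δ := div_nonneg (sub_nonneg.2 hab) n.cast_nonneg
  have hx : Monotone x := fun i j hij => by simp only [x]; gcongr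
  have hx0 : x 0 = a := by simp [x]
  have hxn : x n = b := by simp only [x, Δ]; field_simp; ring
  have hstep : ∀ i, x (i + 1) - x i = Δ := fun i => by simp only [x]; push_cast; ring
  have hmem : ∀ i ≤ n, x i ∈ Icc a b := fun i hi =>
    ⟨hx0 ▸ hx (Nat.zero_le i), hxn ▸ hx hi⟩
  have hright := MonotoneOn.intervalIntegral_le_sum_right (n := n) hx
    (by rw [hx0, hxn]; exact monotoneOn_of_subgradient h)
  have hleft := sum_mul_le_sub_of_subgradient (U := U) (Q := Q) (x := x) (n := n) fun i hi =>
    h _ (hmem i hi.le) _ (hmem (i + 1) hi)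
  simp only [hstep, hx0, hxn] at hright hleft
  calc ∫ t in a..b, Q t ≤ ∑ i ∈ range n, Δ * Q (x (i + 1)) := hright
    _ = ∑ i ∈ range n, Δ * Q (x i) + Δ * (Q b - Q a) := by
      rw [← hx0, ← hxn, ← sum_range_sub (fun i => Q (x i)), mul_sum, ← sum_add_distrib]
      exact sum_congr rfl fun i _ => by ring
    _ ≤ U b - U a + (b - a) * (Q b - Q a) / n := by
      rw [mul_div_right_comm]; linarith

theorem intervalIntegral_le_sub_of_subgradient {a b : ℝ} {U Q : ℝ → ℝ} (hab : a ≤ b)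
    (h : ∀ x ∈ Icc a b, ∀ y ∈ Icc a b, U x + (y - x) * Q x ≤ U y) :
    ∫ t in a..b, Q t ≤ U b - U a := by
  have hlim : Tendsto (fun n : ℕ => U b - U a + (b - a) * (Q b - Q a) / n) atTop
      (𝓝 (U b - U a)) := by
    simpa using tendsto_const_nhds.add
      (tendsto_const_div_atTop_nhds_zero_nat ((b - a) * (Q b - Q a)))
  exact ge_of_tendsto hlim <| (eventually_gt_atTop 0).mono fun _ hn =>
    intervalIntegral_le_sub_add_div_of_subgradient hab h hn

theorem stmt10_general (θmin θmax : ℝ) (Q P : ℝ → ℝ)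
    (hIC : ∀ θ ∈ Set.Icc θmin θmax, ∀ r ∈ Set.Icc θmin θmax,
      θ * Q r - P r ≤ θ * Q θ - P θ)
    (hIR : P θmin ≤ θmin * Q θmin) :
    ∀ r ∈ Set.Icc θmin θmax, P r ≤ r * Q r - ∫ s in θmin..r, Q s := by
  intro r hr
  have hsub : Icc θmin r ⊆ Icc θmin θmax := Icc_subset_Icc_right hr.2
  have := intervalIntegral_le_sub_of_subgradient (U := fun θ => θ * Q θ - P θ) (Q := Q) hr.1
    fun x hx y hy => by linarith [hIC y (hsub hy) x (hsub hx)]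
  linarith

/-- Any incentive-compatible payment scheme with individual rationality at the
lowest type is bounded above by the Myerson payment:
`P(r) ≤ r·Q(r) − ∫_{θmin}^r Q(s) ds` for all `r ∈ Θ`. -/
theorem stmt10 (θmin θmax : ℝ) (hθ : θmin ≤ θmax) (Q P : ℝ → ℝ)
    (hint : IntervalIntegrable Q MeasureTheory.volume θmin θmax)
    (hQ0 : ∀ x ∈ Set.Icc θmin θmax, 0 ≤ Q x)
    (hQ1 : ∀ x ∈ Set.Icc θmin θmax, Q x ≤ 1)
    (hIC : ∀ θ ∈ Set.Icc θmin θmax, ∀ r ∈ Set.Icc θmin θmax,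
      θ * Q r - P r ≤ θ * Q θ - P θ)
    (hIR : P θmin ≤ θmin * Q θmin) :
    ∀ r ∈ Set.Icc θmin θmax, P r ≤ r * Q r - ∫ s in θmin..r, Q s :=
  stmt10_general θmin θmax Q P hIC hIR
end

section
/- For the truncated exponential family π_α(x) = α·exp(−α x)/(1 − exp(−α)) on [0,1], the hazard rate λ_α(x) = π_α(x)/(1 − Π_α(x)) equals α·exp(−α x)/(exp(−α x) − exp(−α)) and is: (i) strictly increasing in x on [0,1), and (ii) strictly increasing in α for each fixed x ∈ [0,1). Consequently the family satisfies the generalized monotone hazard rate condition: if x ≥ x' and α > α', then λ_α(x) > λ_{α'}(x'). -/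
/-!
Writing `t = 1 - x`, the hazard rate is `α / (1 - e^{-α t})`. For fixed `α` the denominator
decreases as `x` grows. For fixed `t > 0` it equals `(1/t) · u / (1 - e^{-u})` with `u = α t`, and
`(1 - e^{-u}) / u` is the slope of the secant of the strictly convex function `exp` between `-u`
and `0`, hence strictly decreasing in `u`. Monotonicity in both arguments gives the generalized
monotone hazard rate condition.
-/

/-- Hazard rate of the truncated exponential distribution with parameter `α` on `[0,1]`. -/
noncomputable def hazard (α x : ℝ) : ℝ :=
  α * Real.exp (-α * x) / (Real.exp (-α * x) - Real.exp (-α))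

open Real Set

lemma one_sub_exp_neg_pos {u : ℝ} (hu : 0 < u) : 0 < 1 - exp (-u) := by
  linarith [exp_lt_one_iff.mpr (neg_neg_iff_pos.mpr hu)]

lemma strictAntiOn_one_sub_exp_neg_div : StrictAntiOn (fun u => (1 - exp (-u)) / u) (Ioi 0) := by
  intro u hu v hv huv
  have hslope := strictConvexOn_exp.secant_strict_mono (mem_univ 0) (mem_univ (-v))
    (mem_univ (-u)) (by linarith [mem_Ioi.mp hv]) (by linarith [mem_Ioi.mp hu]) (neg_lt_neg huv)
  simp only [exp_zero, sub_zero] at hslope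
  rwa [← neg_div_neg_eq (exp (-v) - 1), ← neg_div_neg_eq (exp (-u) - 1), neg_sub, neg_sub,
    neg_neg, neg_neg] at hslope

lemma strictMonoOn_div_one_sub_exp_neg : StrictMonoOn (fun u => u / (1 - exp (-u))) (Ioi 0) := by
  intro u hu v hv huv
  have hpos : ∀ w ∈ Ioi (0 : ℝ), 0 < (1 - exp (-w)) / w :=
    fun w hw => div_pos (one_sub_exp_neg_pos hw) hw
  simpa only [inv_div] using
    (inv_lt_inv₀ (hpos u hu) (hpos v hv)).mpr (strictAntiOn_one_sub_exp_neg_div hu hv huv)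

lemma hazard_eq_div_one_sub_exp (α x : ℝ) : hazard α x = α / (1 - exp (-(α * (1 - x)))) := by
  have hsplit : exp (-α) = exp (-α * x) * exp (-(α * (1 - x))) := by
    rw [← exp_add]; ring_nf
  rw [hazard, hsplit, ← mul_one_sub, mul_comm α, mul_div_mul_left _ _ (exp_ne_zero _)]

lemma hazard_eq_truncExp_density_div_survival {α : ℝ} (hα : 0 < α) (x : ℝ) :
    (α * exp (-α * x) / (1 - exp (-α))) / (1 - (1 - exp (-α * x)) / (1 - exp (-α)))
      = hazard α x := by
  have hmass := one_sub_exp_neg_pos hα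
  rw [hazard, one_sub_div hmass.ne', sub_sub_sub_cancel_left, div_div_div_cancel_right₀ hmass.ne']

lemma hazard_strictMonoOn {α : ℝ} (hα : 0 < α) : StrictMonoOn (hazard α) (Iio 1) := by
  intro x _ y hy hxy
  rw [hazard_eq_div_one_sub_exp, hazard_eq_div_one_sub_exp]
  have hy' : 0 < α * (1 - y) := mul_pos hα (sub_pos.mpr hy)
  refine div_lt_div_of_pos_left hα (one_sub_exp_neg_pos hy') ?_
  gcongr

lemma hazard_lt_hazard_of_lt {α' α x : ℝ} (hx : x < 1) (hα' : 0 < α') (hαα' : α' < α) :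
    hazard α' x < hazard α x := by
  have ht : 0 < 1 - x := sub_pos.mpr hx
  have hscaled : ∀ β, hazard β x = (1 - x)⁻¹ * ((β * (1 - x)) / (1 - exp (-(β * (1 - x))))) :=
    fun β => by rw [hazard_eq_div_one_sub_exp]; field_simp
  rw [hscaled, hscaled]
  exact mul_lt_mul_of_pos_left (strictMonoOn_div_one_sub_exp_neg (mul_pos hα' ht)
    (mul_pos (hα'.trans hαα') ht) (mul_lt_mul_of_pos_right hαα' ht)) (inv_pos.mpr ht)

/-- For the truncated exponential family, the hazard rate
`π_α(x)/(1 − Π_α(x))` equals `α e^{−αx}/(e^{−αx} − e^{−α})`, is (i) strictly increasing in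
`x` on `[0,1)`, (ii) strictly increasing in `α` for fixed `x ∈ [0,1)`, and consequently the
family satisfies the generalized monotone hazard rate condition. -/
theorem stmt13 :
    (∀ α : ℝ, 0 < α → ∀ x ∈ Set.Ico (0:ℝ) 1,
      (α * Real.exp (-α * x) / (1 - Real.exp (-α))) /
          (1 - (1 - Real.exp (-α * x)) / (1 - Real.exp (-α)))
        = hazard α x) ∧
    (∀ α : ℝ, 0 < α → StrictMonoOn (hazard α) (Set.Ico (0:ℝ) 1)) ∧
    (∀ x ∈ Set.Ico (0:ℝ) 1, ∀ α' α : ℝ, 0 < α' → α' < α →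
      hazard α' x < hazard α x) ∧
    (∀ α' α : ℝ, 0 < α' → α' < α →
      ∀ x' ∈ Set.Ico (0:ℝ) 1, ∀ x ∈ Set.Ico (0:ℝ) 1, x' ≤ x →
        hazard α' x' < hazard α x) := by
  refine ⟨fun α hα x _ => hazard_eq_truncExp_density_div_survival hα x,
    fun α hα => (hazard_strictMonoOn hα).mono fun x hx => hx.2,
    fun x hx α' α hα' hαα' => hazard_lt_hazard_of_lt hx.2 hα' hαα', ?_⟩
  intro α' α hα' hαα' x' hx' x hx hxx'
  calc hazard α' x' ≤ hazard α' x := (hazard_strictMonoOn hα').monotoneOn hx'.2 hx.2 hxx'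
    _ < hazard α x := hazard_lt_hazard_of_lt hx.2 hα' hαα'
end

section
/- Let w_α(x) = x − (1/α)(1 − exp(α(x−1))) for α > 0, x ∈ [0,1]. If α2 > α1 > 0, then w_{α2}(x) > w_{α1}(x) for all x ∈ [0,1). Consequently the reserve prices θres(α) := the unique root of w_α in [0,1] satisfy θres(α2) < θres(α1): more flexible consumers (larger α) face a lower reserve price. -/
/-!
Writing `u = α (x - 1)`, the penalty term of `w_α(x)` is `(1 - x)` times the slope of `exp`
between `0` and `u`. As `exp` is strictly convex this slope increases with `u`, and for `x < 1`
a larger `α` gives a smaller `u`, hence a smaller penalty and a larger virtual valuation. Since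
`w_α(1) = 1`, a root of `w_{α₂}` lies below `1`, so `w_{α₁}` is negative there, and strict
monotonicity of `w_{α₁}` puts its own root further right.
-/

/-- Virtual valuation of the truncated exponential distribution with parameter `α` on `[0,1]`. -/
noncomputable def virtualVal (α x : ℝ) : ℝ :=
  x - (1/α) * (1 - Real.exp (α * (x - 1)))

open Real Set

theorem StrictConvexOn.strictMonoOn_slope {s : Set ℝ} {f : ℝ → ℝ} (hf : StrictConvexOn ℝ s f)
    {a : ℝ} (ha : a ∈ s) : StrictMonoOn (slope f a) (s \ {a}) := by
  intro x hx y hy hxy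
  simpa only [slope_def_field] using hf.secant_strict_mono ha hx.1 hy.1 hx.2 hy.2 hxy

lemma virtualVal_eq_sub_mul_slope {α x : ℝ} (hα : α ≠ 0) (hx : x ≠ 1) :
    virtualVal α x = x - (1 - x) * slope rexp 0 (α * (x - 1)) := by
  have hx' : x - 1 ≠ 0 := sub_ne_zero.2 hx
  rw [virtualVal, slope_def_field, exp_zero]
  field_simp
  ring

lemma virtualVal_one (α : ℝ) : virtualVal α 1 = 1 := by
  simp [virtualVal]

lemma virtualVal_strictMono {α : ℝ} (hα : 0 < α) : StrictMono (virtualVal α) := by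
  have hexp : Monotone fun x => (1 / α) * rexp (α * (x - 1)) - 1 / α := fun x y hxy => by
    dsimp only
    gcongr
  convert strictMono_id.add_monotone hexp using 1
  ext x
  simp only [virtualVal, id]
  ring

lemma virtualVal_lt_virtualVal {α₁ α₂ x : ℝ} (h₁ : 0 < α₁) (h₁₂ : α₁ < α₂) (hx : x < 1) :
    virtualVal α₁ x < virtualVal α₂ x := by
  have h₂ : 0 < α₂ := h₁.trans h₁₂
  have hx0 : x - 1 < 0 := sub_neg.2 hx
  have hslope : slope rexp 0 (α₂ * (x - 1)) < slope rexp 0 (α₁ * (x - 1)) :=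
    strictConvexOn_exp.strictMonoOn_slope (mem_univ 0)
      ⟨mem_univ _, (mul_neg_of_pos_of_neg h₂ hx0).ne⟩
      ⟨mem_univ _, (mul_neg_of_pos_of_neg h₁ hx0).ne⟩
      (mul_lt_mul_of_neg_right h₁₂ hx0)
  rw [virtualVal_eq_sub_mul_slope h₁.ne' hx.ne, virtualVal_eq_sub_mul_slope h₂.ne' hx.ne]
  gcongr

/-- For `α2 > α1 > 0`, the virtual valuations satisfy
`w_{α2}(x) > w_{α1}(x)` for all `x ∈ [0,1)`; consequently the reserve prices (roots of
`w_α` in `[0,1]`) satisfy `θres(α2) < θres(α1)`: more flexible consumers face a lower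
reserve price. -/
theorem stmt14 (α1 α2 : ℝ) (h1 : 0 < α1) (h12 : α1 < α2) :
    (∀ x ∈ Set.Ico (0:ℝ) 1, virtualVal α1 x < virtualVal α2 x) ∧
    (∀ θ1 θ2 : ℝ, θ1 ∈ Set.Icc (0:ℝ) 1 → θ2 ∈ Set.Icc (0:ℝ) 1 →
      virtualVal α1 θ1 = 0 → virtualVal α2 θ2 = 0 → θ2 < θ1) := by
  refine ⟨fun x hx => virtualVal_lt_virtualVal h1 h12 hx.2, fun θ1 θ2 _ hθ2 hroot1 hroot2 => ?_⟩
  have hθ2_lt : θ2 < 1 :=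
    hθ2.2.lt_of_ne fun h => by simp [h, virtualVal_one] at hroot2
  have hneg : virtualVal α1 θ2 < 0 := hroot2 ▸ virtualVal_lt_virtualVal h1 h12 hθ2_lt
  exact (virtualVal_strictMono h1).lt_iff_lt.1 (hroot1 ▸ hneg)
end

section
/- Let k ≥ 1, let h be a finite list of consumers each with a flexibility level in {1,...,k} and a real virtual valuation, and suppose u* is a maximizer over U(n,y) of the objective u ↦ ∑_{j=1}^{k} (sum of the u j largest virtual valuations among level-j consumers) + G(u), where G : (Fin k → ℕ) → ℝ is nondecreasing with respect to the coordinatewise shift u ↦ u + e_{j'} − e_{j} for j < j' whenever both vectors lie in U(n,y) (i.e., G(u + e_{j'} − e_j) ≥ G(u)). Then for any j < j', every level-j' consumer whose virtual valuation is strictly greater than the u*(j)-th largest virtual valuation among level-j consumers is served under u* (i.e., its virtual valuation is among the u*(j') largest of level j'), provided u*(j) ≥ 1 and the exchange u* + e_{j'} − e_j remains in U(n,y). -/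
/-!
Assume, for contradiction, that at least `u*(j')` level-`j'` valuations exceed `c.2`. Counting `c`
itself, at least `u*(j') + 1` are `≥ c.2`, so serving one more level-`j'` consumer adds at least
`c.2`; since fewer than `u*(j)` level-`j` valuations reach `c.2`, the last served level-`j`
consumer contributes less than `c.2`. Hence the feasible exchange `u* - e_j + e_{j'}` strictly
increases the virtual surplus and does not decrease `G`, contradicting optimality of `u*`.
-/

/-- Feasible service vectors: `u j ≤ n j` and prefix-sum supply constraints. -/
def Ufeas (k : ℕ) (n y : Fin k → ℕ) : Set (Fin k → ℕ) :=
  {u | (∀ m : Fin k, u m ≤ n m) ∧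
    ∀ m : Fin k, (∑ l ∈ Finset.Iic m, u l) ≤ (∑ l ∈ Finset.Iic m, y l)}

/-- Shift one unit of service from level `j` to level `j'`. -/
def shiftVec (k : ℕ) (u : Fin k → ℕ) (j j' : Fin k) : Fin k → ℕ :=
  fun l => if l = j then u l - 1 else if l = j' then u l + 1 else u l

namespace List

variable {α : Type*}

theorem Sublist.sum_le_sum_take [AddCommMonoid α] [PartialOrder α] [IsOrderedAddMonoid α]
    {t l : List α} (h : t <+ l) (hl : l.SortedGE) : t.sum ≤ (l.take t.length).sum := by
  induction h with
  | slnil => simp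
  | @cons t l a h ih =>
    have ih := ih hl.pairwise.of_cons.sortedGE
    cases hm : t.length with
    | zero => simp [length_eq_zero_iff.1 hm]
    | succ m =>
      have hml : m < l.length := by have := h.length_le; omega
      have hla : l[m] ≤ a := rel_of_pairwise_cons hl.pairwise (getElem_mem hml)
      rw [hm, take_add_one, sum_append, getElem?_eq_getElem hml] at ih
      calc t.sum ≤ (l.take m).sum + l[m] := by simpa using ih
        _ ≤ a + (l.take m).sum := by rw [add_comm]; gcongr
        _ = ((a :: l).take (m + 1)).sum := by simp
  | cons_cons a h ih =>
    simpa using add_le_add_right (ih hl.pairwise.of_cons.sortedGE) a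

theorem SortedGE.le_getElem_iff_lt_length_filter [LinearOrder α] {l : List α} (hl : l.SortedGE)
    {v : α} {i : ℕ} (hi : i < l.length) : v ≤ l[i] ↔ i < (l.filter (v ≤ ·)).length := by
  constructor
  · intro hv
    have hprefix : ∀ x ∈ l.take (i + 1), v ≤ x := by
      intro x hx
      obtain ⟨a, ha, rfl⟩ := List.mem_iff_getElem.mp hx
      simp only [length_take, getElem_take] at ha ⊢
      exact hv.trans (hl.getElem_ge_getElem_of_le (by omega))
    calc i < (l.take (i + 1)).length := by simp; omega
      _ = ((l.take (i + 1)).filter (v ≤ ·)).length := by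
        rw [List.filter_eq_self.2 (by simpa using hprefix)]
      _ ≤ (l.filter (v ≤ ·)).length := ((take_sublist _ _).filter _).length_le
  · contrapose!
    intro hv
    have hsuffix : ((l.drop i).filter (v ≤ ·)) = [] := by
      refine filter_eq_nil_iff.2 fun x hx => ?_
      obtain ⟨a, ha, rfl⟩ := List.mem_iff_getElem.mp hx
      simp only [length_drop, getElem_drop] at ha ⊢
      simpa using (hl.getElem_ge_getElem_of_le (by omega)).trans_lt hv
    calc (l.filter (v ≤ ·)).length
        = ((l.take i).filter (v ≤ ·)).length + ((l.drop i).filter (v ≤ ·)).length := by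
          rw [← length_append, ← filter_append, take_append_drop]
      _ = ((l.take i).filter (v ≤ ·)).length := by rw [hsuffix, length_nil, add_zero]
      _ ≤ i := (length_filter_le _ _).trans (length_take_le _ _)

end List

open Multiset

theorem Multiset.card_filter_lt_lt_card_filter_le {α : Type*} [Preorder α] [DecidableLT α]
    [DecidableLE α] {s : Multiset α} {v : α} (hv : v ∈ s) :
    card (s.filter (v < ·)) < card (s.filter (v ≤ ·)) := by
  refine card_lt_card (lt_of_le_of_ne (monotone_filter_right s fun _ => le_of_lt) fun h => ?_)
  have : v ∈ s.filter (v ≤ ·) := mem_filter.2 ⟨hv, le_rfl⟩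
  rw [← h, mem_filter] at this
  exact lt_irrefl v this.2

theorem Multiset.le_sort_getElem_iff_lt_card_filter {α : Type*} [LinearOrder α]
    (s : Multiset α) {v : α} {m : ℕ} (hm : m < card s) :
    v ≤ (s.sort (· ≥ ·))[m]'(by rwa [length_sort]) ↔ m < card (s.filter (v ≤ ·)) := by
  rw [(pairwise_sort s _).sortedGE.le_getElem_iff_lt_length_filter]
  conv_rhs => rw [← sort_eq s (· ≥ ·)]
  rfl

section TopSum

variable (s : Multiset ℝ) {m : ℕ} {v : ℝ}

theorem topSum_eq_sum_take (hm : m ≤ card s) : topSum s m = ((s.sort (· ≥ ·)).take m).sum := by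
  set l := s.sort (· ≥ ·)
  have hl : (l : Multiset ℝ) = s := sort_eq s _
  refine IsGreatest.csSup_eq ⟨⟨l.take m, ?_, ?_, by simp⟩, ?_⟩
  · rw [← hl]; exact coe_le.2 (l.take_sublist m).subperm
  · simpa [l] using hm
  · rintro r ⟨t, ht, rfl, rfl⟩
    induction t using Quotient.inductionOn with | h t => ?_
    rw [← hl, quot_mk_to_coe, coe_le] at ht
    obtain ⟨t', hperm, hsub⟩ := ht
    simpa [hperm.length_eq, hperm.sum_eq] using hsub.sum_le_sum_take (pairwise_sort s _).sortedGE

theorem topSum_succ (hm : m < card s) :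
    topSum s (m + 1) = topSum s m + (s.sort (· ≥ ·))[m]'(by rwa [length_sort]) := by
  rw [topSum_eq_sum_take s hm, topSum_eq_sum_take s hm.le, List.take_add_one, List.sum_append,
    List.getElem?_eq_getElem (by rwa [length_sort])]
  simp

theorem topSum_succ_lt_add (hm : m < card s) (hv : card (s.filter (v ≤ ·)) ≤ m) :
    topSum s (m + 1) < topSum s m + v := by
  rw [topSum_succ s hm]
  gcongr
  exact not_le.1 fun h => (le_sort_getElem_iff_lt_card_filter s hm).1 h |>.not_ge hv

theorem add_le_topSum_succ (hv : m < card (s.filter (v ≤ ·))) :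
    topSum s m + v ≤ topSum s (m + 1) := by
  have hm : m < card s := hv.trans_le (card_le_card (filter_le _ s))
  rw [topSum_succ s hm]
  gcongr
  exact (le_sort_getElem_iff_lt_card_filter s hm).2 hv

end TopSum

theorem sum_shiftVec_sub {k : ℕ} {M : Type*} [AddCommGroup M] (f : Fin k → ℕ → M)
    (u : Fin k → ℕ) {j j' : Fin k} (hjj : j ≠ j') :
    ∑ m, f m (shiftVec k u j j' m) - ∑ m, f m (u m) =
      (f j (u j - 1) - f j (u j)) + (f j' (u j' + 1) - f j' (u j')) := by
  rw [← Finset.sum_sub_distrib, Fintype.sum_eq_add j j' hjj]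
  · simp [shiftVec, hjj.symm]
  · rintro m ⟨hmj, hmj'⟩
    simp [shiftVec, hmj, hmj']

theorem stmt15_general (k : ℕ) (h : Multiset (Fin k × ℝ)) (y n : Fin k → ℕ)
    (hn : ∀ j : Fin k, n j = Multiset.card (h.filter (fun c => c.1 = j)))
    (G : (Fin k → ℕ) → ℝ)
    (hG : ∀ u : Fin k → ℕ, ∀ j j' : Fin k, j < j' →
      u ∈ Ufeas k n y → shiftVec k u j j' ∈ Ufeas k n y → G u ≤ G (shiftVec k u j j'))
    (ustar : Fin k → ℕ) (hmem : ustar ∈ Ufeas k n y)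
    (hopt : ∀ u ∈ Ufeas k n y,
      (∑ j : Fin k, topSum ((h.filter (fun c => c.1 = j)).map Prod.snd) (u j)) + G u ≤
      (∑ j : Fin k, topSum ((h.filter (fun c => c.1 = j)).map Prod.snd) (ustar j)) + G ustar)
    (j j' : Fin k) (hjj : j < j') (hj1 : 1 ≤ ustar j)
    (hex : shiftVec k ustar j j' ∈ Ufeas k n y)
    (c : Fin k × ℝ) (hc : c ∈ h) (hcl : c.1 = j')
    (hcv : Multiset.card
        (((h.filter (fun d => d.1 = j)).map Prod.snd).filter (fun x => c.2 ≤ x))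
      < ustar j) :
    Multiset.card
        (((h.filter (fun d => d.1 = j')).map Prod.snd).filter (fun x => c.2 < x))
      < ustar j' := by
  by_contra! hcon
  set val : Fin k → Multiset ℝ := fun m => (h.filter (fun d => d.1 = m)).map Prod.snd
  have hcard : ustar j ≤ card (val j) := by simpa [val, hn] using hmem.1 j
  have hloss : topSum (val j) (ustar j) < topSum (val j) (ustar j - 1) + c.2 := by
    have := topSum_succ_lt_add (val j) (m := ustar j - 1) (by omega) (Nat.le_sub_one_of_lt hcv)
    rwa [Nat.sub_add_cancel hj1] at this
  have hc_mem : c.2 ∈ val j' := mem_map.2 ⟨c, mem_filter.2 ⟨hc, hcl⟩, rfl⟩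
  have hgain : topSum (val j') (ustar j') + c.2 ≤ topSum (val j') (ustar j' + 1) :=
    add_le_topSum_succ (val j') (hcon.trans_lt (card_filter_lt_lt_card_filter_le hc_mem))
  have hexchange := sum_shiftVec_sub (fun m => topSum (val m)) ustar hjj.ne
  linarith [hopt _ hex, hG ustar j j' hjj hmem hex]

/-- abstraction of Proposition 1: Let `u*` maximize over `U(n,y)` the
objective `u ↦ ∑_j (sum of the u j largest level-j virtual valuations) + G u`, where `G` is
nondecreasing under the exchange `u ↦ u − e_j + e_{j'}` for `j < j'` (whenever both lie in
`U(n,y)`).  Then for `j < j'`, any level-`j'` consumer `c` whose virtual valuation is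
strictly greater than the `u*(j)`-th largest level-`j` virtual valuation (i.e. fewer than
`u*(j)` level-`j` valuations are `≥ c.2`) is served under `u*` (i.e. fewer than `u*(j')`
level-`j'` valuations strictly exceed `c.2`), provided `u*(j) ≥ 1` and the exchanged vector
remains feasible. -/
theorem stmt15 (k : ℕ) (hk : 1 ≤ k) (h : Multiset (Fin k × ℝ)) (y n : Fin k → ℕ)
    (hn : ∀ j : Fin k, n j = Multiset.card (h.filter (fun c => c.1 = j)))
    (G : (Fin k → ℕ) → ℝ)
    (hG : ∀ u : Fin k → ℕ, ∀ j j' : Fin k, j < j' →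
      u ∈ Ufeas k n y → shiftVec k u j j' ∈ Ufeas k n y → G u ≤ G (shiftVec k u j j'))
    (ustar : Fin k → ℕ) (hmem : ustar ∈ Ufeas k n y)
    (hopt : ∀ u ∈ Ufeas k n y,
      (∑ j : Fin k, topSum ((h.filter (fun c => c.1 = j)).map Prod.snd) (u j)) + G u ≤
      (∑ j : Fin k, topSum ((h.filter (fun c => c.1 = j)).map Prod.snd) (ustar j)) + G ustar)
    (j j' : Fin k) (hjj : j < j') (hj1 : 1 ≤ ustar j)
    (hex : shiftVec k ustar j j' ∈ Ufeas k n y)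
    (c : Fin k × ℝ) (hc : c ∈ h) (hcl : c.1 = j')
    (hcv : Multiset.card
        (((h.filter (fun d => d.1 = j)).map Prod.snd).filter (fun x => c.2 ≤ x))
      < ustar j) :
    Multiset.card
        (((h.filter (fun d => d.1 = j')).map Prod.snd).filter (fun x => c.2 < x))
      < ustar j' :=
  stmt15_general k h y n hn G hG ustar hmem hopt j j' hjj hj1 hex c hc hcl hcv
end

section
/- Let k ≥ 1 and fix n, y : Fin k → ℕ. Suppose u ∈ U(n,y), j < j' are flexibility levels with u j ≥ 1 and u j' ≤ n j' − 1. Define û by û j = u j − 1, û j' = u j' + 1, û l = u l otherwise. Then û ∈ U(n,y). -/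
/-!
Moving a unit from `j` to a later index `j'` lowers the cumulative sums up to `m` by one when
`j ≤ m < j'` and leaves them unchanged otherwise, so every cumulative constraint that held before
still holds; the capacity constraint at `j'` is exactly the hypothesis `u j' + 1 ≤ n j'`.
-/

open Finset

section Transfer

variable {ι : Type*} [DecidableEq ι]

def transferUnit (u : ι → ℕ) (j j' : ι) (l : ι) : ℕ :=
  if l = j then u l - 1 else if l = j' then u l + 1 else u l

variable {u : ι → ℕ} {j j' : ι}

theorem transferUnit_le_of_ne {l : ι} (hl : l ≠ j') : transferUnit u j j' l ≤ u l := by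
  unfold transferUnit
  split_ifs <;> omega

theorem transferUnit_le {n : ι → ℕ} (hu : ∀ l, u l ≤ n l) (hj' : u j' + 1 ≤ n j') (l : ι) :
    transferUnit u j j' l ≤ n l := by
  by_cases hl : l = j'
  · unfold transferUnit
    split_ifs with hlj
    · exact (Nat.sub_le _ _).trans (hu l)
    · exact hl ▸ hj'
  · exact (transferUnit_le_of_ne hl).trans (hu l)

theorem transferUnit_add_ite (hj : 1 ≤ u j) (hne : j ≠ j') (l : ι) :
    transferUnit u j j' l + (if l = j then 1 else 0) = u l + (if l = j' then 1 else 0) := by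
  unfold transferUnit
  by_cases hlj : l = j
  · subst hlj
    simp only [if_true, if_neg hne]
    omega
  · by_cases hlj' : l = j'
    · subst hlj'
      simp [hlj]
    · simp [hlj, hlj']

theorem sum_transferUnit_of_mem {s : Finset ι} (hj : 1 ≤ u j) (hne : j ≠ j') (hjs : j ∈ s)
    (hj's : j' ∈ s) : ∑ l ∈ s, transferUnit u j j' l = ∑ l ∈ s, u l := by
  have h := Finset.sum_congr rfl fun l (_ : l ∈ s) => transferUnit_add_ite hj hne l
  rw [sum_add_distrib, sum_add_distrib, sum_ite_eq', sum_ite_eq', if_pos hjs, if_pos hj's] at h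
  exact Nat.add_right_cancel h

theorem sum_Iic_transferUnit_le [LinearOrder ι] [LocallyFiniteOrderBot ι] (hjj : j < j')
    (hj : 1 ≤ u j) (m : ι) : ∑ l ∈ Iic m, transferUnit u j j' l ≤ ∑ l ∈ Iic m, u l := by
  by_cases hm : j' ≤ m
  · exact (sum_transferUnit_of_mem hj hjj.ne (mem_Iic.2 (hjj.le.trans hm)) (mem_Iic.2 hm)).le
  · refine sum_le_sum fun l hl => transferUnit_le_of_ne ?_
    rintro rfl
    exact hm (mem_Iic.1 hl)

end Transfer

theorem stmt16_general (k : ℕ) (n y u : Fin k → ℕ)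
    (hu1 : ∀ m : Fin k, u m ≤ n m)
    (hu2 : ∀ m : Fin k, (∑ l ∈ Finset.Iic m, u l) ≤ (∑ l ∈ Finset.Iic m, y l))
    (j j' : Fin k) (hjj : j < j') (hj : 1 ≤ u j) (hj' : u j' + 1 ≤ n j') :
    (∀ m : Fin k,
      (if m = j then u m - 1 else if m = j' then u m + 1 else u m) ≤ n m) ∧
    (∀ m : Fin k,
      (∑ l ∈ Finset.Iic m, (if l = j then u l - 1 else if l = j' then u l + 1 else u l))
        ≤ (∑ l ∈ Finset.Iic m, y l)) :=
  ⟨transferUnit_le hu1 hj', fun m => (sum_Iic_transferUnit_le hjj hj m).trans (hu2 m)⟩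

/-- Transferring one unit of service from a less flexible level `j` to a more
flexible level `j' > j` preserves feasibility of the service vector. -/
theorem stmt16 (k : ℕ) (hk : 1 ≤ k) (n y u : Fin k → ℕ)
    (hu1 : ∀ m : Fin k, u m ≤ n m)
    (hu2 : ∀ m : Fin k, (∑ l ∈ Finset.Iic m, u l) ≤ (∑ l ∈ Finset.Iic m, y l))
    (j j' : Fin k) (hjj : j < j') (hj : 1 ≤ u j) (hj' : u j' + 1 ≤ n j') :
    (∀ m : Fin k,
      (if m = j then u m - 1 else if m = j' then u m + 1 else u m) ≤ n m) ∧
    (∀ m : Fin k,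
      (∑ l ∈ Finset.Iic m, (if l = j then u l - 1 else if l = j' then u l + 1 else u l))
        ≤ (∑ l ∈ Finset.Iic m, y l)) :=
  stmt16_general k n y u hu1 hu2 j j' hjj hj hj'
end
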